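/- arXiv:2405.14029 — 2 statements merged into one kernel-verified Lean document; each statement's English description precedes it below -/
import Mathlib

section
/- Let g : (0,∞) → ℝ be continuous with g(x) > 0 for all x > 0, g(x) → 1 as x → 0⁺, and suppose there exist constants C > 0 and δ > 0 such that g(x) ≤ C·x^(−1/2)·exp(−δ·x) for all x ≥ 1. Let I(x) = ∫₀ˣ g(t) dt and suppose I(x) → L as x → ∞. Fix K ≥ 1 and positive reals a_1, …, a_K, and for γ̄ > 0 set c(γ̄) = Σ_{k=1}^K 1/(γ̄·a_k). Then the constant d := ∫₀^∞ x·g(x) dx lies in (0, ∞), and lim_{γ̄ → ∞} γ̄ · ( L − ∫₀^∞ I(x)·c(γ̄)·e^{−c(γ̄)·x} dx ) = d · Σ_{k=1}^K 1/a_k. -/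
open MeasureTheory Filter Set

private lemma aux_one_sub_exp_neg_le (t : ℝ) : 1 - Real.exp (-t) ≤ t := by
  have := Real.add_one_le_exp (-t); linarith

private lemma aux_one_sub_exp_neg_nonneg {t : ℝ} (ht : 0 ≤ t) : 0 ≤ 1 - Real.exp (-t) := by
  have : Real.exp (-t) ≤ 1 := Real.exp_le_one_iff.2 (by linarith)
  linarith

private lemma aux_tendsto_slope (b : ℝ) :
    Tendsto (fun γ : ℝ => γ * (1 - Real.exp (-(b / γ)))) atTop (nhds b) := by
  have hd : HasDerivAt (fun u : ℝ => 1 - Real.exp (-(b * u))) b 0 := by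
    have h1 : HasDerivAt (fun u : ℝ => -(b * u)) (-b) 0 := by
      exact ((hasDerivAt_id (0 : ℝ)).const_mul b).neg.congr_deriv (by simp)
    have h2 := h1.exp
    have h3 := (hasDerivAt_const (0 : ℝ) (1 : ℝ)).sub h2
    exact h3.congr_deriv (by simp)
  have hslope := hasDerivAt_iff_tendsto_slope.mp hd
  have hinv : Tendsto (fun γ : ℝ => γ⁻¹) atTop (nhdsWithin 0 {(0 : ℝ)}ᶜ) := by
    apply tendsto_nhdsWithin_of_tendsto_nhds_of_eventually_within _ tendsto_inv_atTop_zero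
    filter_upwards [eventually_ge_atTop (1 : ℝ)] with γ hγ
    simp only [mem_compl_iff, mem_singleton_iff]
    exact inv_ne_zero (by linarith)
  have hcomp := hslope.comp hinv
  apply hcomp.congr'
  filter_upwards [eventually_ge_atTop (1 : ℝ)] with γ hγ
  have hγ0 : γ ≠ 0 := by linarith
  have hγi : γ⁻¹ ≠ 0 := inv_ne_zero hγ0
  simp only [Function.comp_apply, slope_def_field]
  rw [show b * γ⁻¹ = b / γ by rw [div_eq_mul_inv]]
  field_simp
  ring_nf; rw [Real.exp_zero]; ring

theorem stmt_0
    (g : ℝ → ℝ)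
    (hg_cont : ContinuousOn g (Ioi 0))
    (hg_pos : ∀ x > (0:ℝ), 0 < g x)
    (hg_lim0 : Tendsto g (nhdsWithin 0 (Ioi 0)) (nhds 1))
    (C δ : ℝ) (hC : 0 < C) (hδ : 0 < δ)
    (hg_decay : ∀ x ≥ (1:ℝ), g x ≤ C * x ^ (-(1:ℝ)/2) * Real.exp (-δ * x))
    (I : ℝ → ℝ) (hI : ∀ x, I x = ∫ t in (0:ℝ)..x, g t)
    (L : ℝ) (hL : Tendsto I atTop (nhds L))
    (K : ℕ) (hK : 1 ≤ K)
    (a : Fin K → ℝ) (ha : ∀ k, 0 < a k)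
    (c : ℝ → ℝ) (hc : ∀ γbar, c γbar = ∑ k, 1 / (γbar * a k)) :
    IntegrableOn (fun x => x * g x) (Ioi 0) ∧
    (0 < ∫ x in Ioi (0:ℝ), x * g x) ∧
    Tendsto
      (fun γbar => γbar *
        (L - ∫ x in Ioi (0:ℝ), I x * (c γbar * Real.exp (-(c γbar) * x))))
      atTop
      (nhds ((∫ x in Ioi (0:ℝ), x * g x) * ∑ k, 1 / a k)) := by
  classical
  -- the extended function G
  set G : ℝ → ℝ := fun x => if x ≤ 0 then 1 else g x with hGdef
  have hGg : ∀ x ∈ Ioi (0:ℝ), G x = g x := fun x hx => if_neg (not_le.2 hx)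
  have hG_cont : Continuous G := by
    rw [continuous_iff_continuousAt]
    intro x
    rcases lt_trichotomy x 0 with h | h | h
    · have hev : ∀ᶠ y in nhds x, G y = 1 := by
        filter_upwards [Iio_mem_nhds h] with y hy
        exact if_pos (le_of_lt hy)
      exact continuousAt_const.congr (hev.mono fun y hy => hy.symm)
    · subst h
      have hG0 : G 0 = 1 := if_pos le_rfl
      rw [ContinuousAt, hG0, ← nhdsLE_sup_nhdsGT (0 : ℝ), tendsto_sup]
      constructor
      · apply Tendsto.congr' _ (tendsto_const_nhds (α := ℝ))
        filter_upwards [self_mem_nhdsWithin] with y hy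
        exact (if_pos hy).symm
      · apply Tendsto.congr' _ hg_lim0
        filter_upwards [self_mem_nhdsWithin] with y hy
        exact (hGg y hy).symm
    · have hev : ∀ᶠ y in nhds x, g y = G y := by
        filter_upwards [Ioi_mem_nhds h] with y hy
        exact (hGg y hy).symm
      exact (((hg_cont x h).continuousAt (Ioi_mem_nhds h)).congr hev)
  have hG_pos : ∀ x, 0 < G x := by
    intro x
    by_cases h : x ≤ 0
    · simp [hGdef, h]
    · push_neg at h
      rw [hGg x h]; exact hg_pos x h
  have hG_nonneg : ∀ x, 0 ≤ G x := fun x => (hG_pos x).le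
  -- decay bounds
  have hG_decay : ∀ x ≥ (1:ℝ), G x ≤ C * Real.exp (-δ * x) := by
    intro x hx
    have hx0 : (0:ℝ) < x := lt_of_lt_of_le one_pos hx
    rw [hGg x hx0]
    calc g x ≤ C * x ^ (-(1:ℝ)/2) * Real.exp (-δ * x) := hg_decay x hx
      _ ≤ C * 1 * Real.exp (-δ * x) := by
          apply mul_le_mul_of_nonneg_right _ (Real.exp_pos _).le
          exact mul_le_mul_of_nonneg_left
            (Real.rpow_le_one_of_one_le_of_nonpos hx (by norm_num)) hC.le
      _ = C * Real.exp (-δ * x) := by ring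
  have hxG_decay : ∀ x ≥ (1:ℝ), x * G x ≤ (2 * C / δ) * Real.exp (-(δ/2) * x) := by
    intro x hx
    have hx0 : (0:ℝ) < x := lt_of_lt_of_le one_pos hx
    have h1 : x * Real.exp (-(δ/2) * x) ≤ 2 / δ := by
      have ht : δ/2 * x ≤ Real.exp (δ/2 * x) := by
        have := Real.add_one_le_exp (δ/2 * x); linarith
      rw [show -(δ/2) * x = -(δ/2 * x) by ring, Real.exp_neg, inv_eq_one_div, mul_one_div,
        div_le_div_iff₀ (Real.exp_pos _) hδ]
      nlinarith [Real.exp_pos (δ/2 * x)]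
    have h2 : Real.exp (-δ * x) = Real.exp (-(δ/2) * x) * Real.exp (-(δ/2) * x) := by
      rw [← Real.exp_add]; ring_nf
    calc x * G x ≤ x * (C * Real.exp (-δ * x)) := by
          exact mul_le_mul_of_nonneg_left (hG_decay x hx) hx0.le
      _ = C * (x * Real.exp (-(δ/2) * x)) * Real.exp (-(δ/2) * x) := by rw [h2]; ring
      _ ≤ C * (2/δ) * Real.exp (-(δ/2) * x) := by
          apply mul_le_mul_of_nonneg_right _ (Real.exp_pos _).le
          exact mul_le_mul_of_nonneg_left h1 hC.le
      _ = (2 * C / δ) * Real.exp (-(δ/2) * x) := by ring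
  -- integrability
  have hIntG : IntegrableOn G (Ioi 0) := by
    rw [← Ioc_union_Ioi_eq_Ioi (zero_le_one' ℝ)]
    refine (hG_cont.integrableOn_Ioc).union ?_
    apply ((exp_neg_integrableOn_Ioi 1 hδ).const_mul C).mono'
      (hG_cont.aestronglyMeasurable.restrict)
    rw [ae_restrict_iff' measurableSet_Ioi]
    filter_upwards with x hx
    rw [Real.norm_eq_abs, abs_of_nonneg (hG_nonneg x)]
    exact hG_decay x hx.le
  have hδ2 : (0:ℝ) < δ/2 := by linarith
  have hIntxG : IntegrableOn (fun x => x * G x) (Ioi 0) := by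
    rw [← Ioc_union_Ioi_eq_Ioi (zero_le_one' ℝ)]
    refine ((continuous_id.mul hG_cont).integrableOn_Ioc).union ?_
    apply ((exp_neg_integrableOn_Ioi 1 hδ2).const_mul (2 * C / δ)).mono'
      ((continuous_id.mul hG_cont).aestronglyMeasurable.restrict)
    rw [ae_restrict_iff' measurableSet_Ioi]
    filter_upwards with x hx
    have hx0 : (0:ℝ) < x := lt_of_lt_of_le one_pos hx.le
    show ‖x * G x‖ ≤ _
    rw [Real.norm_eq_abs, abs_of_nonneg (mul_nonneg hx0.le (hG_nonneg x))]
    exact hxG_decay x hx.le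
  -- J = antiderivative of G
  set J : ℝ → ℝ := fun x => ∫ t in (0:ℝ)..x, G t with hJdef
  have hJ_deriv : ∀ x, HasDerivAt J (G x) x :=
    fun x => (hG_cont.integral_hasStrictDerivAt 0 x).hasDerivAt
  have hJ_cont : Continuous J := by
    rw [continuous_iff_continuousAt]
    exact fun x => (hJ_deriv x).continuousAt
  have hIJ : ∀ x, 0 ≤ x → I x = J x := by
    intro x hx
    rw [hI]
    show (∫ t in (0:ℝ)..x, g t) = ∫ t in (0:ℝ)..x, G t
    rw [intervalIntegral.integral_of_le hx, intervalIntegral.integral_of_le hx]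
    exact setIntegral_congr_fun measurableSet_Ioc fun t ht => (hGg t ht.1).symm
  have hJL : Tendsto J atTop (nhds L) := by
    apply hL.congr'
    filter_upwards [eventually_ge_atTop (0:ℝ)] with x hx
    exact hIJ x hx
  have hJ_mono : Monotone J := by
    intro x y hxy
    have h := intervalIntegral.integral_interval_sub_left
      (hG_cont.intervalIntegrable 0 y : IntervalIntegrable G MeasureTheory.volume 0 y)
      (hG_cont.intervalIntegrable 0 x)
    have hpos : 0 ≤ ∫ t in x..y, G t :=
      intervalIntegral.integral_nonneg hxy (fun u _ => hG_nonneg u)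
    have : J y - J x = ∫ t in x..y, G t := h
    linarith
  have hJ_le_L : ∀ x, J x ≤ L := hJ_mono.ge_of_tendsto hJL
  have hJ0 : J 0 = 0 := by simp [hJdef]
  have hJ_nonneg : ∀ x, 0 ≤ x → 0 ≤ J x := by
    intro x hx
    have := hJ_mono hx
    rw [hJ0] at this
    exact this
  have hL_eq : L = ∫ x in Ioi (0:ℝ), G x := by
    have h1 : Tendsto (fun b : ℝ => ∫ t in (0:ℝ)..b, G t) atTop
        (nhds (∫ x in Ioi (0:ℝ), G x)) :=
      intervalIntegral_tendsto_integral_Ioi 0 hIntG tendsto_id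
    exact tendsto_nhds_unique hJL h1
  -- for every rate cc > 0, integrability facts and the key identity
  have hInt2 : ∀ cc : ℝ, 0 < cc →
      IntegrableOn (fun x => G x * Real.exp (-cc * x)) (Ioi 0) := by
    intro cc hcc
    have hcont : Continuous fun x : ℝ => G x * Real.exp (-cc * x) := by fun_prop
    apply hIntG.mono' (hcont.aestronglyMeasurable.restrict)
    rw [ae_restrict_iff' measurableSet_Ioi]
    filter_upwards with x hx
    rw [Real.norm_eq_abs, abs_of_nonneg (mul_nonneg (hG_nonneg x) (Real.exp_pos _).le)]
    calc G x * Real.exp (-cc * x) ≤ G x * 1 := by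
          apply mul_le_mul_of_nonneg_left _ (hG_nonneg x)
          apply Real.exp_le_one_iff.2
          have : (0:ℝ) < x := hx
          nlinarith
      _ = G x := mul_one _
  have hInt1 : ∀ cc : ℝ, 0 < cc →
      IntegrableOn (fun x => J x * (cc * Real.exp (-cc * x))) (Ioi 0) := by
    intro cc hcc
    have hcont : Continuous fun x : ℝ => J x * (cc * Real.exp (-cc * x)) := by fun_prop
    apply (((exp_neg_integrableOn_Ioi 0 hcc).const_mul (L * cc)).mono'
      (hcont.aestronglyMeasurable.restrict))
    rw [ae_restrict_iff' measurableSet_Ioi]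
    filter_upwards with x hx
    have hx0 : (0:ℝ) < x := hx
    have h1 : 0 ≤ J x := hJ_nonneg x hx0.le
    rw [Real.norm_eq_abs, abs_of_nonneg (mul_nonneg h1 (mul_nonneg hcc.le (Real.exp_pos _).le))]
    have hJL' := hJ_le_L x
    calc J x * (cc * Real.exp (-cc * x)) ≤ L * (cc * Real.exp (-cc * x)) :=
          mul_le_mul_of_nonneg_right hJL' (by positivity)
      _ = L * cc * Real.exp (-cc * x) := by ring
  have hExpTend : ∀ cc : ℝ, 0 < cc →
      Tendsto (fun x : ℝ => Real.exp (-cc * x)) atTop (nhds 0) := by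
    intro cc hcc
    have h1 : Tendsto (fun x : ℝ => cc * x) atTop atTop :=
      Tendsto.const_mul_atTop hcc tendsto_id
    have := Real.tendsto_exp_neg_atTop_nhds_zero.comp h1
    apply this.congr
    intro x; simp [neg_mul]
  have key : ∀ cc : ℝ, 0 < cc →
      ∫ x in Ioi (0:ℝ), J x * (cc * Real.exp (-cc * x)) =
      ∫ x in Ioi (0:ℝ), G x * Real.exp (-cc * x) := by
    intro cc hcc
    have hF_deriv : ∀ x ∈ Ioi (0:ℝ), HasDerivAt (fun x => -(J x * Real.exp (-cc * x)))
        (J x * (cc * Real.exp (-cc * x)) - G x * Real.exp (-cc * x)) x := by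
      intro x _
      have h1 : HasDerivAt (fun x : ℝ => Real.exp (-cc * x))
          (Real.exp (-cc * x) * (-cc)) x := by
        simpa using ((hasDerivAt_id x).const_mul (-cc)).exp
      have h2 := ((hJ_deriv x).mul h1).neg
      exact h2.congr_deriv (by ring)
    have hInt : IntegrableOn (fun x => J x * (cc * Real.exp (-cc * x)) -
        G x * Real.exp (-cc * x)) (Ioi 0) :=
      (hInt1 cc hcc).sub (hInt2 cc hcc)
    have hTend : Tendsto (fun x => -(J x * Real.exp (-cc * x))) atTop (nhds 0) := by
      have := (hJL.mul (hExpTend cc hcc)).neg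
      simpa using this
    have hcw : ContinuousWithinAt (fun x => -(J x * Real.exp (-cc * x))) (Ici 0) 0 := by
      have hcont : Continuous fun x : ℝ => -(J x * Real.exp (-cc * x)) := by fun_prop
      exact hcont.continuousAt.continuousWithinAt
    have h := integral_Ioi_of_hasDerivAt_of_tendsto hcw hF_deriv hInt hTend
    rw [hJ0] at h
    simp only [mul_zero, zero_mul, neg_zero, sub_zero] at h
    have hsub := integral_sub (hInt1 cc hcc) (hInt2 cc hcc)
    rw [h] at hsub
    linarith [hsub.symm]
  -- the sum s
  set s : ℝ := ∑ k, 1 / a k with hsdef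
  have hs : 0 < s := by
    apply Finset.sum_pos (fun k _ => by have := ha k; positivity)
    have : Nonempty (Fin K) := ⟨⟨0, hK⟩⟩
    exact Finset.univ_nonempty
  have hcγ : ∀ γ : ℝ, 0 < γ → c γ = s / γ := by
    intro γ hγ
    rw [hc, hsdef, Finset.sum_div]
    congr 1
    ext k
    rw [div_div, mul_comm]
  -- conclusion part 1
  have hEq1 : EqOn (fun x => x * G x) (fun x : ℝ => x * g x) (Ioi 0) := by
    intro x hx
    simp only
    rw [hGg x hx]
  have part1 : IntegrableOn (fun x => x * g x) (Ioi 0) :=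
    hIntxG.congr_fun hEq1 measurableSet_Ioi
  have hIntEq : ∫ x in Ioi (0:ℝ), x * g x = ∫ x in Ioi (0:ℝ), x * G x :=
    setIntegral_congr_fun measurableSet_Ioi fun x hx => (hEq1 hx).symm
  -- conclusion part 2
  have part2 : 0 < ∫ x in Ioi (0:ℝ), x * g x := by
    rw [hIntEq]
    have hle : ∫ x in Ioc (1:ℝ) 2, x * G x ≤ ∫ x in Ioi (0:ℝ), x * G x := by
      apply setIntegral_mono_set hIntxG
      · rw [EventuallyLE, ae_restrict_iff' measurableSet_Ioi]
        filter_upwards with x hx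
        exact mul_nonneg (le_of_lt hx) (hG_nonneg x)
      · filter_upwards with x hx
        exact lt_trans one_pos hx.1
    have hpos : 0 < ∫ x in Ioc (1:ℝ) 2, x * G x := by
      rw [← intervalIntegral.integral_of_le (by norm_num : (1:ℝ) ≤ 2)]
      apply intervalIntegral.intervalIntegral_pos_of_pos_on
        ((continuous_id.mul hG_cont).intervalIntegrable 1 2)
      · intro x hx
        exact mul_pos (lt_trans one_pos hx.1) (hG_pos x)
      · norm_num
    linarith
  refine ⟨part1, part2, ?_⟩
  -- part 3: the limit
  -- DCT
  have hbound_int : Integrable (fun x => G x * (s * x)) (volume.restrict (Ioi 0)) := by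
    have : (fun x => G x * (s * x)) = fun x => s * (x * G x) := by
      ext x; ring
    rw [this]
    exact hIntxG.const_mul s
  have hDCT : Tendsto (fun γ : ℝ => ∫ x in Ioi (0:ℝ),
      G x * (γ * (1 - Real.exp (-(s * x / γ))))) atTop
      (nhds (∫ x in Ioi (0:ℝ), G x * (s * x))) := by
    apply tendsto_integral_filter_of_dominated_convergence (fun x => G x * (s * x))
    · filter_upwards with γ
      have hcont : Continuous fun x : ℝ => G x * (γ * (1 - Real.exp (-(s * x / γ)))) := by
        fun_prop
      exact hcont.aestronglyMeasurable.restrict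
    · filter_upwards [eventually_ge_atTop (1:ℝ)] with γ hγ
      rw [ae_restrict_iff' measurableSet_Ioi]
      filter_upwards with x hx
      have hx0 : (0:ℝ) < x := hx
      have hγ0 : (0:ℝ) < γ := lt_of_lt_of_le one_pos hγ
      have ht : 0 ≤ s * x / γ := by positivity
      have h1 : 0 ≤ 1 - Real.exp (-(s * x / γ)) := aux_one_sub_exp_neg_nonneg ht
      have h2 : 1 - Real.exp (-(s * x / γ)) ≤ s * x / γ := aux_one_sub_exp_neg_le _
      rw [Real.norm_eq_abs, abs_of_nonneg (mul_nonneg (hG_nonneg x)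
        (mul_nonneg hγ0.le h1))]
      have h3 : γ * (1 - Real.exp (-(s * x / γ))) ≤ s * x := by
        have := mul_le_mul_of_nonneg_left h2 hγ0.le
        rw [mul_div_assoc'] at this
        calc γ * (1 - Real.exp (-(s * x / γ))) ≤ γ * (s * x) / γ := this
          _ = s * x := by field_simp
      exact mul_le_mul_of_nonneg_left h3 (hG_nonneg x)
    · exact hbound_int
    · rw [ae_restrict_iff' measurableSet_Ioi]
      filter_upwards with x _
      exact tendsto_const_nhds.mul (aux_tendsto_slope (s * x))
  -- identify the limit value
  have hlim_eq : ∫ x in Ioi (0:ℝ), G x * (s * x) =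
      (∫ x in Ioi (0:ℝ), x * g x) * s := by
    rw [hIntEq]
    rw [show (fun x => G x * (s * x)) = fun x : ℝ => s * (x * G x) by ext x; ring]
    rw [integral_const_mul]
    ring
  rw [hsdef] at hlim_eq
  rw [← hlim_eq]
  -- eventual equality of the two expressions
  apply hDCT.congr'
  filter_upwards [eventually_ge_atTop (1:ℝ)] with γ hγ
  have hγ0 : (0:ℝ) < γ := lt_of_lt_of_le one_pos hγ
  have hcc : 0 < c γ := by rw [hcγ γ hγ0]; positivity
  have step1 : ∫ x in Ioi (0:ℝ), I x * (c γ * Real.exp (-(c γ) * x)) =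
      ∫ x in Ioi (0:ℝ), J x * (c γ * Real.exp (-(c γ) * x)) :=
    setIntegral_congr_fun measurableSet_Ioi fun x hx => by
      rw [hIJ x (le_of_lt hx)]
  have step2 := key (c γ) hcc
  have step3 : γ * (L - ∫ x in Ioi (0:ℝ), G x * Real.exp (-(c γ) * x)) =
      ∫ x in Ioi (0:ℝ), G x * (γ * (1 - Real.exp (-(s * x / γ)))) := by
    rw [hL_eq, ← integral_sub hIntG (hInt2 (c γ) hcc)]
    rw [← integral_const_mul]
    apply setIntegral_congr_fun measurableSet_Ioi
    intro x hx
    have : -(c γ) * x = -(s * x / γ) := by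
      rw [hcγ γ hγ0]; field_simp
    simp only
    rw [this]
    ring
  calc ∫ x in Ioi (0:ℝ), G x * (γ * (1 - Real.exp (-(s * x / γ))))
      = γ * (L - ∫ x in Ioi (0:ℝ), G x * Real.exp (-(c γ) * x)) := step3.symm
    _ = γ * (L - ∫ x in Ioi (0:ℝ), I x * (c γ * Real.exp (-(c γ) * x))) := by
        rw [step1, step2]
end

section
/- Let 𝒳 = {x_1, …, x_M} ⊂ ℂ with M ≥ 2 consist of pairwise distinct points with zero mean (Σ_{m=1}^M x_m = 0) and unit average energy ((1/M)·Σ_{m=1}^M |x_m|² = 1), and let d_min = min_{m ≠ m'} |x_m − x_{m'}| > 0. Then there exist constants C > 0 and γ₀ > 0 such that for all γ ≥ γ₀: MMSE_M(γ) ≤ C·γ^(−1/2)·exp(−γ·d_min²/8). -/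
open MeasureTheory Set Real Finset

/- ### Auxiliary lemmas -/

theorem gauss_int' (c : ℂ) : (∫ y : ℂ, rexp (-‖y - c‖ ^ 2)) = π := by
  rw [integral_sub_right_eq_self (fun y : ℂ => rexp (-‖y‖ ^ 2)) c]
  have := GaussianFourier.integral_rexp_neg_mul_sq_norm (V := ℂ) one_pos
  simp only [Complex.finrank_real_complex, neg_mul, one_mul] at this
  rw [this]
  norm_num

theorem gauss_integrable' (c : ℂ) :
    Integrable (fun y : ℂ => rexp (-‖y - c‖ ^ 2)) := by
  have h := (GaussianFourier.integrable_cexp_neg_mul_sq_norm_add (V := ℂ) (b := 1)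
    (by norm_num) 0 0).norm
  have h1 : Integrable (fun v : ℂ => rexp (-‖v‖ ^ 2)) := by
    convert h using 2 with v
    simp [Complex.norm_exp]
    norm_cast
  simpa using h1.comp_sub_right c

theorem midpoint_id' (a b y : ℂ) :
    ‖y - a‖ ^ 2 + ‖y - b‖ ^ 2
      = 2 * ‖y - (a + b) / 2‖ ^ 2 + ‖a - b‖ ^ 2 / 2 := by
  have h := parallelogram_law_with_norm ℝ (y - (a + b) / 2) ((a - b) / 2)
  have e1 : y - (a + b) / 2 + (a - b) / 2 = y - b := by ring
  have e2 : y - (a + b) / 2 - (a - b) / 2 = y - a := by ring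
  rw [e1, e2] at h
  have e3 : ‖(a - b) / 2‖ ^ 2 = ‖a - b‖ ^ 2 / 4 := by
    rw [norm_div, Complex.norm_two]; ring
  rw [e3] at h
  linarith

theorem sqrt_gauss_pt' (a b y : ℂ) :
    Real.sqrt (rexp (-‖y - a‖ ^ 2) * rexp (-‖y - b‖ ^ 2))
      = rexp (-‖a - b‖ ^ 2 / 4) * rexp (-‖y - (a + b) / 2‖ ^ 2) := by
  rw [← Real.exp_add, ← Real.exp_add]
  have hsqrt : ∀ t : ℝ, Real.sqrt (rexp t) = rexp (t / 2) := fun t => by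
    rw [show t = t / 2 + t / 2 by ring, Real.exp_add, Real.sqrt_mul_self (Real.exp_nonneg _)]
    ring_nf
  rw [hsqrt]
  congr 1
  have := midpoint_id' a b y
  linarith

theorem sqrt_gauss_integrable' (a b : ℂ) :
    Integrable (fun y : ℂ =>
      Real.sqrt (rexp (-‖y - a‖ ^ 2) * rexp (-‖y - b‖ ^ 2))) := by
  simp only [sqrt_gauss_pt']
  exact (gauss_integrable' ((a + b) / 2)).const_mul _

theorem sqrt_gauss_int' (a b : ℂ) :
    (∫ y : ℂ, Real.sqrt (rexp (-‖y - a‖ ^ 2) * rexp (-‖y - b‖ ^ 2)))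
      = π * rexp (-‖a - b‖ ^ 2 / 4) := by
  simp only [sqrt_gauss_pt']
  rw [integral_const_mul, gauss_int']
  ring

theorem lagrange_real' {M : ℕ} (r e : Fin M → ℝ) :
    (∑ m, e m) * (∑ m, r m ^ 2 * e m) - (∑ m, r m * e m) ^ 2
      = (1/2) * ∑ m, ∑ m', (r m - r m') ^ 2 * (e m * e m') := by
  have h : ∀ m : Fin M, ∀ m' : Fin M, (r m - r m') ^ 2 * (e m * e m')
      = (r m ^ 2 * e m) * e m' + e m * (r m' ^ 2 * e m') - (2 * (r m * e m)) * (r m' * e m') := by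
    intros; ring
  simp only [h, Finset.sum_sub_distrib, Finset.sum_add_distrib, ← Finset.sum_mul,
    ← Finset.mul_sum]
  ring

theorem lagrange_complex' {M : ℕ} (x : Fin M → ℂ) (e : Fin M → ℝ) :
    (∑ m, e m) * (∑ m, ‖x m‖ ^ 2 * e m)
        - ‖∑ m, x m * (e m : ℂ)‖ ^ 2
      = (1/2) * ∑ m, ∑ m', ‖x m - x m'‖ ^ 2 * (e m * e m') := by
  have hre : (∑ m, x m * (e m : ℂ)).re = ∑ m, (x m).re * e m := by
    rw [Complex.re_sum]; exact Finset.sum_congr rfl fun m _ => by simp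
  have him : (∑ m, x m * (e m : ℂ)).im = ∑ m, (x m).im * e m := by
    rw [Complex.im_sum]; exact Finset.sum_congr rfl fun m _ => by simp
  have habs : ∀ z : ℂ, ‖z‖ ^ 2 = z.re ^ 2 + z.im ^ 2 := by
    intro z; rw [Complex.sq_norm, Complex.normSq_apply]; ring
  simp only [habs, hre, him, Complex.sub_re, Complex.sub_im]
  have e1 : ∑ m, ((x m).re ^ 2 + (x m).im ^ 2) * e m
      = (∑ m, (x m).re ^ 2 * e m) + ∑ m, (x m).im ^ 2 * e m := by
    rw [← Finset.sum_add_distrib]; exact Finset.sum_congr rfl fun m _ => by ring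
  have e2 : ∑ m, ∑ m', (((x m).re - (x m').re) ^ 2 + ((x m).im - (x m').im) ^ 2) * (e m * e m')
      = (∑ m, ∑ m', ((x m).re - (x m').re) ^ 2 * (e m * e m'))
        + ∑ m, ∑ m', ((x m).im - (x m').im) ^ 2 * (e m * e m') := by
    rw [← Finset.sum_add_distrib]
    refine Finset.sum_congr rfl fun m _ => ?_
    rw [← Finset.sum_add_distrib]
    exact Finset.sum_congr rfl fun m' _ => by ring
  rw [e1, e2]
  have h1 := lagrange_real' (fun m => (x m).re) e
  have h2 := lagrange_real' (fun m => (x m).im) e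
  linarith [h1, h2]

theorem pointwise_bound' {M : ℕ} (hM : 0 < M) (x : Fin M → ℂ) (e : Fin M → ℝ)
    (he : ∀ m, 0 < e m) :
    (∑ m, ‖x m‖ ^ 2 * e m)
        - ‖∑ m, x m * (e m : ℂ)‖ ^ 2 / (∑ m, e m)
      ≤ ∑ m, ∑ m', (1/4) * ‖x m - x m'‖ ^ 2 * Real.sqrt (e m * e m') := by
  have hS : 0 < ∑ m, e m := Finset.sum_pos (fun m _ => he m) (by
    simpa [Finset.univ_nonempty_iff] using Fin.pos_iff_nonempty.mp hM)
  have key := lagrange_complex' x e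
  have hQf : (∑ m, ‖x m‖ ^ 2 * e m)
        - ‖∑ m, x m * (e m : ℂ)‖ ^ 2 / (∑ m, e m)
      = ((1/2) * ∑ m, ∑ m', ‖x m - x m'‖ ^ 2 * (e m * e m')) / (∑ m, e m) := by
    rw [← key]; field_simp
  rw [hQf, Finset.mul_sum, Finset.sum_div]
  refine Finset.sum_le_sum fun m _ => ?_
  rw [Finset.mul_sum, Finset.sum_div]
  refine Finset.sum_le_sum fun m' _ => ?_
  rcases eq_or_ne m m' with rfl | hne
  · simp
  · have hpair : e m + e m' ≤ ∑ k, e k := by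
      have := Finset.sum_le_sum_of_subset_of_nonneg (Finset.subset_univ ({m, m'} : Finset (Fin M)))
        (fun k _ _ => (he k).le)
      rwa [Finset.sum_pair hne] at this
    set s := Real.sqrt (e m * e m') with hs
    have hs0 : 0 ≤ s := Real.sqrt_nonneg _
    have hee : e m * e m' = s ^ 2 := (Real.sq_sqrt (mul_pos (he m) (he m')).le).symm
    have h3 : 2 * s ≤ ∑ k, e k := by
      have : 2 * s ≤ e m + e m' := by
        rw [hs, Real.sqrt_mul (he m).le]
        nlinarith [Real.sq_sqrt (he m).le, Real.sq_sqrt (he m').le,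
          Real.sqrt_nonneg (e m), Real.sqrt_nonneg (e m'),
          sq_nonneg (Real.sqrt (e m) - Real.sqrt (e m'))]
      linarith
    have hc : (0:ℝ) ≤ ‖x m - x m'‖ ^ 2 := by positivity
    rw [hee, div_le_iff₀ hS]
    nlinarith [mul_nonneg (mul_nonneg hc hs0) (sub_nonneg.mpr h3)]

theorem cs_bound' {M : ℕ} (hM : 0 < M) (x : Fin M → ℂ) (e : Fin M → ℝ)
    (he : ∀ m, 0 < e m) :
    ‖∑ m, x m * (e m : ℂ)‖ ^ 2 / (∑ m, e m)
      ≤ ∑ m, ‖x m‖ ^ 2 * e m := by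
  have hS : 0 < ∑ m, e m := Finset.sum_pos (fun m _ => he m) (by
    simpa [Finset.univ_nonempty_iff] using Fin.pos_iff_nonempty.mp hM)
  rw [div_le_iff₀ hS]
  have key := lagrange_complex' x e
  have hnn : (0:ℝ) ≤ (1/2) * ∑ m, ∑ m', ‖x m - x m'‖ ^ 2 * (e m * e m') := by
    refine mul_nonneg (by norm_num) (Finset.sum_nonneg fun m _ => Finset.sum_nonneg
      fun m' _ => mul_nonneg (by positivity) (mul_pos (he m) (he m')).le)
  nlinarith [key, hnn, hS]


theorem final_est {D Mr dmin γ : ℝ} (hD0 : 0 ≤ D) (hMR : 0 < Mr) (hdpos : 0 < dmin)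
    (hγ1 : 1 ≤ γ) :
    D / (4 * Mr) * rexp (-γ * dmin ^ 2 / 4)
      ≤ (D / (4 * Mr) * (8 / dmin ^ 2) + 1) * γ ^ (-(1:ℝ)/2) * rexp (-γ * dmin ^ 2 / 8) := by
  have hγ0 : (0:ℝ) < γ := lt_of_lt_of_le one_pos hγ1
  have hsplit : rexp (-γ * dmin ^ 2 / 4) = rexp (-γ * dmin ^ 2 / 8) * rexp (-γ * dmin ^ 2 / 8) := by
    rw [← Real.exp_add]; ring_nf
  have hp : (0:ℝ) < γ ^ ((1:ℝ)/2) := Real.rpow_pos_of_pos hγ0 _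
  have hrpowneg : γ ^ (-(1:ℝ)/2) = (γ ^ ((1:ℝ)/2))⁻¹ := by
    rw [show (-(1:ℝ))/2 = -((1:ℝ)/2) by norm_num, Real.rpow_neg hγ0.le]
  have hexpge : γ ^ ((1:ℝ)/2) * (dmin ^ 2 / 8) ≤ rexp (γ * dmin ^ 2 / 8) := by
    have h4 : γ ^ ((1:ℝ)/2) ≤ γ := by
      have := Real.rpow_le_rpow_of_exponent_le hγ1 (show (1:ℝ)/2 ≤ 1 by norm_num)
      rwa [Real.rpow_one] at this
    have h5 : γ * (dmin ^ 2 / 8) ≤ rexp (γ * dmin ^ 2 / 8) := by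
      have h := Real.add_one_le_exp (γ * dmin ^ 2 / 8)
      nlinarith
    nlinarith [sq_nonneg dmin]
  have hEbd : rexp (-γ * dmin ^ 2 / 8) ≤ 8 / dmin ^ 2 * γ ^ (-(1:ℝ)/2) := by
    rw [hrpowneg, show -γ * dmin ^ 2 / 8 = -(γ * dmin ^ 2 / 8) by ring, Real.exp_neg]
    have hpe : (0:ℝ) < γ ^ ((1:ℝ)/2) * (dmin ^ 2 / 8) := by positivity
    have hinv : (rexp (γ * dmin ^ 2 / 8))⁻¹ ≤ (γ ^ ((1:ℝ)/2) * (dmin ^ 2 / 8))⁻¹ :=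
      inv_anti₀ hpe hexpge
    refine hinv.trans ?_
    rw [mul_inv, show (dmin ^ 2 / 8)⁻¹ = 8 / dmin ^ 2 by rw [inv_div]]
    ring_nf
    exact le_refl _
  have hγp : (0:ℝ) ≤ γ ^ (-(1:ℝ)/2) := by rw [hrpowneg]; positivity
  calc D / (4 * Mr) * rexp (-γ * dmin ^ 2 / 4)
      = D / (4 * Mr) * rexp (-γ * dmin ^ 2 / 8) * rexp (-γ * dmin ^ 2 / 8) := by
        rw [hsplit]; ring
    _ ≤ D / (4 * Mr) * (8 / dmin ^ 2 * γ ^ (-(1:ℝ)/2)) * rexp (-γ * dmin ^ 2 / 8) := by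
        apply mul_le_mul_of_nonneg_right _ (Real.exp_nonneg _)
        exact mul_le_mul_of_nonneg_left hEbd (by positivity)
    _ ≤ (D / (4 * Mr) * (8 / dmin ^ 2) + 1) * γ ^ (-(1:ℝ)/2) * rexp (-γ * dmin ^ 2 / 8) := by
        apply mul_le_mul_of_nonneg_right _ (Real.exp_nonneg _)
        nlinarith [hγp, hD0, hMR]

/- ### Main definitions and theorem -/

/-- The MMSE function of a finite constellation `x : Fin M → ℂ` with equiprobable symbols,
observed through a complex Gaussian channel `Y = √γ·X + N`. -/
noncomputable def constellationMMSE {M : ℕ} (x : Fin M → ℂ) (γ : ℝ) : ℝ :=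
  1 - (1 / (M * Real.pi)) * ∫ y : ℂ,
      ‖∑ m, x m * (Real.exp (-(‖y - (Real.sqrt γ : ℂ) * x m‖ ^ 2)) : ℂ)‖ ^ 2
        / ∑ m, Real.exp (-(‖y - (Real.sqrt γ : ℂ) * x m‖ ^ 2))

theorem stmt_2 (M : ℕ) (hM : 2 ≤ M) (x : Fin M → ℂ)
    (hdist : Function.Injective x)
    (hmean : ∑ m, x m = 0)
    (henergy : (1 / (M : ℝ)) * ∑ m, ‖x m‖ ^ 2 = 1)
    (dmin : ℝ)
    (hdmin : IsLeast {d : ℝ | ∃ m m' : Fin M, m ≠ m' ∧ d = ‖x m - x m'‖} dmin)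
    (hdpos : 0 < dmin) :
    ∃ C > (0:ℝ), ∃ γ₀ > (0:ℝ), ∀ γ ≥ γ₀,
      constellationMMSE x γ ≤ C * γ ^ (-(1:ℝ)/2) * Real.exp (-γ * dmin ^ 2 / 8) := by
  have hMpos : 0 < M := by omega
  have hMR : (0:ℝ) < M := by exact_mod_cast hMpos
  set D : ℝ := ∑ m, ∑ m', ‖x m - x m'‖ ^ 2 with hD
  have hD0 : 0 ≤ D := Finset.sum_nonneg fun m _ => Finset.sum_nonneg fun m' _ => by positivity
  refine ⟨D / (4 * M) * (8 / dmin ^ 2) + 1, by positivity, 1, one_pos, fun γ hγ1 => ?_⟩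
  have hγ0 : (0:ℝ) < γ := lt_of_lt_of_le one_pos hγ1
  set a : Fin M → ℂ := fun m => (Real.sqrt γ : ℂ) * x m with ha
  set E : Fin M → ℂ → ℝ := fun m y => rexp (-‖y - a m‖ ^ 2) with hE
  have hEpos : ∀ m y, 0 < E m y := fun m y => Real.exp_pos _
  set f : ℂ → ℝ := fun y =>
      ‖∑ m, x m * (Real.exp (-(‖y - (Real.sqrt γ : ℂ) * x m‖ ^ 2)) : ℂ)‖ ^ 2
        / ∑ m, Real.exp (-(‖y - (Real.sqrt γ : ℂ) * x m‖ ^ 2)) with hf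
  set Q : ℂ → ℝ := fun y => ∑ m, ‖x m‖ ^ 2 * E m y with hQ
  set G : ℂ → ℝ := fun y =>
      ∑ m, ∑ m', (1/4) * ‖x m - x m'‖ ^ 2 * Real.sqrt (E m y * E m' y) with hG
  have hfy : ∀ y, f y = ‖∑ m, x m * ((E m y : ℝ) : ℂ)‖ ^ 2 / ∑ m, E m y := by
    intro y; rfl
  -- pointwise facts
  have hfQ : ∀ y, f y ≤ Q y := fun y => by
    rw [hfy]; exact cs_bound' hMpos x (fun m => E m y) (fun m => hEpos m y)
  have hQfG : ∀ y, Q y - f y ≤ G y := fun y => by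
    rw [hfy]; exact pointwise_bound' hMpos x (fun m => E m y) (fun m => hEpos m y)
  have hf0 : ∀ y, 0 ≤ f y := fun y => by
    rw [hfy]
    exact div_nonneg (by positivity) (Finset.sum_nonneg fun m _ => (hEpos m y).le)
  -- integrability
  have hQint : Integrable Q := integrable_finset_sum _ fun m _ =>
    (gauss_integrable' (a m)).const_mul _
  have hGint : Integrable G := integrable_finset_sum _ fun m _ =>
    integrable_finset_sum _ fun m' _ => (sqrt_gauss_integrable' (a m) (a m')).const_mul _
  have hEcont : ∀ m, Continuous (fun y => E m y) := fun m => by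
    apply Real.continuous_exp.comp
    exact ((continuous_norm.comp (continuous_id.sub continuous_const)).pow 2).neg
  have hfcont : Continuous f := by
    rw [hf]
    apply Continuous.div
    · exact (continuous_norm.comp (continuous_finset_sum _ fun m _ =>
        continuous_const.mul (Complex.continuous_ofReal.comp (hEcont m)))).pow 2
    · exact continuous_finset_sum _ fun m _ => hEcont m
    · intro y
      exact (Finset.sum_pos (fun m _ => hEpos m y)
        (by simpa [Finset.univ_nonempty_iff] using Fin.pos_iff_nonempty.mp hMpos)).ne'
  have hfint : Integrable f := by
    refine hQint.mono' hfcont.aestronglyMeasurable (ae_of_all _ fun y => ?_)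
    rw [Real.norm_eq_abs, abs_of_nonneg (hf0 y)]
    exact hfQ y
  -- value of ∫ Q
  have hsumsq : (∑ m, ‖x m‖ ^ 2) = M := by
    field_simp at henergy
    linarith
  have hQval : (∫ y, Q y) = M * π := by
    rw [hQ]
    rw [integral_finset_sum _ fun m _ => (gauss_integrable' (a m)).const_mul _]
    have : ∀ m, (∫ y, ‖x m‖ ^ 2 * E m y) = ‖x m‖ ^ 2 * π := by
      intro m
      rw [hE]
      rw [integral_const_mul, gauss_int']
    simp only [hE] at this
    simp_rw [this]
    rw [← Finset.sum_mul, hsumsq]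
  -- bound on ∫ G
  have habsa : ∀ m m', ‖a m - a m'‖ ^ 2 = γ * ‖x m - x m'‖ ^ 2 := by
    intro m m'
    rw [ha]
    simp only
    rw [← mul_sub, norm_mul, Complex.norm_real, Real.norm_eq_abs, abs_of_nonneg (Real.sqrt_nonneg γ), mul_pow,
      Real.sq_sqrt hγ0.le]
  have hGval : (∫ y, G y) ≤ π / 4 * rexp (-γ * dmin ^ 2 / 4) * D := by
    rw [hG]
    rw [integral_finset_sum _ fun m _ =>
      integrable_finset_sum _ fun m' _ => (sqrt_gauss_integrable' (a m) (a m')).const_mul _]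
    have step : ∀ m : Fin M, (∫ y, ∑ m', (1/4) * ‖x m - x m'‖ ^ 2
          * Real.sqrt (E m y * E m' y))
        = ∑ m', (1/4) * ‖x m - x m'‖ ^ 2 * (π * rexp (-‖a m - a m'‖ ^ 2 / 4)) := by
      intro m
      rw [integral_finset_sum _ fun m' _ => (sqrt_gauss_integrable' (a m) (a m')).const_mul _]
      exact Finset.sum_congr rfl fun m' _ => by rw [integral_const_mul, sqrt_gauss_int']
    simp only [hE] at step
    simp_rw [step]
    have termbd : ∀ m m' : Fin M,
        (1/4) * ‖x m - x m'‖ ^ 2 * (π * rexp (-‖a m - a m'‖ ^ 2 / 4))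
          ≤ π / 4 * rexp (-γ * dmin ^ 2 / 4) * ‖x m - x m'‖ ^ 2 := by
      intro m m'
      rcases eq_or_ne m m' with rfl | hne
      · simp
      · have hd : dmin ≤ ‖x m - x m'‖ := hdmin.2 ⟨m, m', hne, rfl⟩
        have hexp : rexp (-‖a m - a m'‖ ^ 2 / 4) ≤ rexp (-γ * dmin ^ 2 / 4) := by
          apply Real.exp_le_exp.mpr
          rw [habsa]
          have : dmin ^ 2 ≤ ‖x m - x m'‖ ^ 2 :=
            pow_le_pow_left₀ hdpos.le hd 2
          nlinarith
        have hc : (0:ℝ) ≤ ‖x m - x m'‖ ^ 2 := by positivity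
        calc (1/4) * ‖x m - x m'‖ ^ 2 * (π * rexp (-‖a m - a m'‖ ^ 2 / 4))
            ≤ (1/4) * ‖x m - x m'‖ ^ 2 * (π * rexp (-γ * dmin ^ 2 / 4)) := by
              apply mul_le_mul_of_nonneg_left _ (by positivity)
              exact mul_le_mul_of_nonneg_left hexp Real.pi_pos.le
          _ = π / 4 * rexp (-γ * dmin ^ 2 / 4) * ‖x m - x m'‖ ^ 2 := by ring
    calc (∑ m, ∑ m', (1/4) * ‖x m - x m'‖ ^ 2
            * (π * rexp (-‖a m - a m'‖ ^ 2 / 4)))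
        ≤ ∑ m, ∑ m', π / 4 * rexp (-γ * dmin ^ 2 / 4) * ‖x m - x m'‖ ^ 2 :=
          Finset.sum_le_sum fun m _ => Finset.sum_le_sum fun m' _ => termbd m m'
      _ = π / 4 * rexp (-γ * dmin ^ 2 / 4) * D := by
          rw [hD, Finset.mul_sum]
          exact Finset.sum_congr rfl fun m _ => by rw [Finset.mul_sum]
  -- lower bound on ∫ f
  have hQfint : (∫ y, (Q y - f y)) = (∫ y, Q y) - ∫ y, f y := integral_sub hQint hfint
  have hmono : (∫ y, (Q y - f y)) ≤ ∫ y, G y :=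
    integral_mono (hQint.sub hfint) hGint fun y => hQfG y
  have hIlow : (M:ℝ) * π - π / 4 * rexp (-γ * dmin ^ 2 / 4) * D ≤ ∫ y, f y := by
    have := hmono
    rw [hQfint, hQval] at this
    linarith [hGval]
  -- unfold MMSE
  have hmmse : constellationMMSE x γ = 1 - (1 / (M * π)) * ∫ y, f y := rfl
  rw [hmmse]
  have hcoef : (0:ℝ) < 1 / (M * π) := by positivity
  have key : 1 - (1 / (M * π)) * ∫ y, f y
      ≤ D / (4 * M) * rexp (-γ * dmin ^ 2 / 4) := by
    have h1 : 1 - (1 / (M * π)) * ∫ y, f y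
        ≤ 1 - (1 / (M * π)) * ((M:ℝ) * π - π / 4 * rexp (-γ * dmin ^ 2 / 4) * D) := by
      have := mul_le_mul_of_nonneg_left hIlow hcoef.le
      linarith
    have h2 : 1 - (1 / (M * π)) * ((M:ℝ) * π - π / 4 * rexp (-γ * dmin ^ 2 / 4) * D)
        = D / (4 * M) * rexp (-γ * dmin ^ 2 / 4) := by
      field_simp
      ring
    linarith
  exact key.trans (final_est hD0 hMR hdpos hγ1)
end
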